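/- (Theorem 1, acceleration-controlled unicycle.) Let p, v ∈ ℝ², r > 0, θ ∈ ℝ and l ≠ 0, with ‖p‖ > r and v ≠ 0. Define w = p + (√(‖p‖² − r²)/‖v‖) · v and the row vector L = (⟨w, (−cos θ, −sin θ)⟩, ⟨w, (l sin θ, −l cos θ)⟩) ∈ ℝ². Then L ≠ 0; that is, the Lie derivative L_g h of the collision cone CBF along the input directions of the acceleration-controlled unicycle model never vanishes on the domain ‖p‖ > r, v ≠ 0. -/

import Mathlib

open scoped RealInnerProductSpace

/-! Since `‖(c / ‖v‖) • v‖ ≤ c` for every `c ≥ 0` (also when `v = 0`), the vector `w` satisfies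
`‖w‖ ≥ ‖p‖ - √(‖p‖² - r²) > 0`. The two input directions `(-cos θ, -sin θ)` and
`(l sin θ, -l cos θ)` are orthogonal and nonzero, so they span the plane and cannot both be
orthogonal to `w ≠ 0`. -/

lemma Real.sqrt_sq_sub_sq_lt {a r : ℝ} (ha : 0 < a) (hr : r ≠ 0) : √(a ^ 2 - r ^ 2) < a :=
  (Real.sqrt_lt' ha).2 (by linarith [pow_pos (abs_pos.2 hr) 2, sq_abs r])

lemma norm_div_norm_smul_le {E : Type*} [NormedAddCommGroup E] [NormedSpace ℝ E]
    {c : ℝ} (hc : 0 ≤ c) (v : E) : ‖(c / ‖v‖) • v‖ ≤ c := by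
  rcases eq_or_ne v 0 with rfl | hv
  · simpa using hc
  · rw [norm_smul, Real.norm_of_nonneg (by positivity), div_mul_cancel₀ _ (norm_ne_zero_iff.2 hv)]

lemma add_sqrt_div_norm_smul_ne_zero {E : Type*} [NormedAddCommGroup E] [NormedSpace ℝ E]
    {p : E} (v : E) {r : ℝ} (hp : p ≠ 0) (hr : r ≠ 0) :
    p + (√(‖p‖ ^ 2 - r ^ 2) / ‖v‖) • v ≠ 0 := by
  rw [← norm_pos_iff]
  have hlt := Real.sqrt_sq_sub_sq_lt (norm_pos_iff.2 hp) hr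
  have hle := norm_div_norm_smul_le (Real.sqrt_nonneg (‖p‖ ^ 2 - r ^ 2)) v
  linarith [norm_sub_le_norm_add p ((√(‖p‖ ^ 2 - r ^ 2) / ‖v‖) • v)]

lemma eq_zero_of_mul_cos_add_mul_sin_eq_zero {x y θ : ℝ}
    (h₁ : x * Real.cos θ + y * Real.sin θ = 0) (h₂ : x * Real.sin θ - y * Real.cos θ = 0) :
    x = 0 ∧ y = 0 := by
  have hθ := Real.sin_sq_add_cos_sq θ
  constructor
  · linear_combination Real.cos θ * h₁ + Real.sin θ * h₂ - x * hθ
  · linear_combination Real.sin θ * h₁ - Real.cos θ * h₂ - y * hθ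

lemma inner_unicycle_inputs_ne_zero {w : EuclideanSpace ℝ (Fin 2)} (hw : w ≠ 0) (θ : ℝ) {l : ℝ}
    (hl : l ≠ 0) :
    (⟪w, (WithLp.toLp 2 ![-Real.cos θ, -Real.sin θ] : EuclideanSpace ℝ (Fin 2))⟫,
      ⟪w, (WithLp.toLp 2 ![l * Real.sin θ, -(l * Real.cos θ)] : EuclideanSpace ℝ (Fin 2))⟫) ≠
      (0, 0) := by
  simp only [ne_eq, Prod.mk.injEq, PiLp.inner_apply, Fin.sum_univ_two, RCLike.inner_apply,
    conj_trivial, Matrix.cons_val_zero, Matrix.cons_val_one]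
  rintro ⟨h₁, h₂⟩
  obtain ⟨hw₀, hw₁⟩ := eq_zero_of_mul_cos_add_mul_sin_eq_zero (θ := θ) (x := w 0) (y := w 1)
    (by linear_combination -h₁)
    (mul_left_cancel₀ hl (by linear_combination h₂))
  exact hw (by ext i; fin_cases i <;> assumption)

theorem c3bf_unicycle_Lgh_ne_zero_general (p v : EuclideanSpace ℝ (Fin 2)) (r θ l : ℝ)
    (hr : 0 < r) (hp : r < ‖p‖) (hl : l ≠ 0) :
    (⟪p + (Real.sqrt (‖p‖ ^ 2 - r ^ 2) / ‖v‖) • v,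
        (WithLp.toLp 2 ![-Real.cos θ, -Real.sin θ] : EuclideanSpace ℝ (Fin 2))⟫,
      ⟪p + (Real.sqrt (‖p‖ ^ 2 - r ^ 2) / ‖v‖) • v,
        (WithLp.toLp 2 ![l * Real.sin θ, -(l * Real.cos θ)] : EuclideanSpace ℝ (Fin 2))⟫) ≠
      (0, 0) :=
  inner_unicycle_inputs_ne_zero
    (add_sqrt_div_norm_smul_ne_zero v (norm_pos_iff.1 (hr.trans hp)) hr.ne') θ hl

/-- Theorem 1, acceleration-controlled unicycle: with
`w = p + (√(‖p‖² − r²)/‖v‖) • v`, the row vector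
`L = (⟪w, (−cos θ, −sin θ)⟫, ⟪w, (l sin θ, −l cos θ)⟫)` is nonzero whenever
`‖p‖ > r > 0`, `v ≠ 0` and `l ≠ 0`. -/
theorem c3bf_unicycle_Lgh_ne_zero (p v : EuclideanSpace ℝ (Fin 2)) (r θ l : ℝ)
    (hr : 0 < r) (hp : r < ‖p‖) (hv : v ≠ 0) (hl : l ≠ 0) :
    (⟪p + (Real.sqrt (‖p‖ ^ 2 - r ^ 2) / ‖v‖) • v,
        (WithLp.toLp 2 ![-Real.cos θ, -Real.sin θ] : EuclideanSpace ℝ (Fin 2))⟫,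
      ⟪p + (Real.sqrt (‖p‖ ^ 2 - r ^ 2) / ‖v‖) • v,
        (WithLp.toLp 2 ![l * Real.sin θ, -(l * Real.cos θ)] : EuclideanSpace ℝ (Fin 2))⟫) ≠
      (0, 0) :=
  c3bf_unicycle_Lgh_ne_zero_general p v r θ l hr hp hl
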